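/- arXiv:2008.03887 — 2 statements merged into one kernel-verified Lean document; each statement's English description precedes it below -/
import Mathlib

section
/- For any graph G without isolated vertices, the paired domination number satisfies γ_pr(G) ≥ 2ρ_3(G), where ρ_3(G) is the 3-packing number. -/
set_option linter.unusedVariables false
set_option linter.unnecessarySeqFocus false

open SimpleGraph

variable {V : Type*} {W : Type*}

/-- The direct (tensor) product of two simple graphs. -/
def SimpleGraph.tensor (G : SimpleGraph V) (H : SimpleGraph W) : SimpleGraph (V × W) where
  Adj p q := G.Adj p.1 q.1 ∧ H.Adj p.2 q.2
  symm := ⟨fun p q h => ⟨h.1.symm, h.2.symm⟩⟩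
  loopless := ⟨fun p h => G.irrefl h.1⟩

/-- A dominating set: every vertex is in `D` or adjacent to a member of `D`. -/
def SimpleGraph.Dominating (G : SimpleGraph V) (D : Set V) : Prop :=
  ∀ v, ∃ u ∈ D, u = v ∨ G.Adj u v

/-- The domination number. -/
noncomputable def SimpleGraph.domNum (G : SimpleGraph V) : ℕ :=
  sInf {n | ∃ D : Set V, G.Dominating D ∧ D.ncard = n}

/-- A total dominating set. -/
def SimpleGraph.TotalDominating (G : SimpleGraph V) (D : Set V) : Prop :=
  ∀ v, ∃ u ∈ D, G.Adj u v

/-- The total domination number. -/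
noncomputable def SimpleGraph.totalDomNum (G : SimpleGraph V) : ℕ :=
  sInf {n | ∃ D : Set V, G.TotalDominating D ∧ D.ncard = n}

/-- A paired dominating set: dominating and the induced subgraph has a perfect matching. -/
def SimpleGraph.PairedDominating (G : SimpleGraph V) (D : Set V) : Prop :=
  G.Dominating D ∧ ∃ M : (G.induce D).Subgraph, M.IsPerfectMatching

/-- The paired domination number. -/
noncomputable def SimpleGraph.pairedDomNum (G : SimpleGraph V) : ℕ :=
  sInf {n | ∃ D : Set V, G.PairedDominating D ∧ D.ncard = n}

/-- A 3-packing: vertices pairwise at distance greater than 3. -/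
def SimpleGraph.Packing3 (G : SimpleGraph V) (P : Set V) : Prop :=
  P.Pairwise fun u v => ¬G.Reachable u v ∨ 3 < G.dist u v

/-- The 3-packing number. -/
noncomputable def SimpleGraph.packNum3 (G : SimpleGraph V) : ℕ :=
  sSup {n | ∃ P : Set V, G.Packing3 P ∧ P.ncard = n}

/-- A minimal dominating set. -/
def SimpleGraph.MinimalDominating (G : SimpleGraph V) (D : Set V) : Prop :=
  G.Dominating D ∧ ∀ D' ⊆ D, G.Dominating D' → D' = D

/-- The upper domination number. -/
noncomputable def SimpleGraph.upperDomNum (G : SimpleGraph V) : ℕ :=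
  sSup {n | ∃ D : Set V, G.MinimalDominating D ∧ D.ncard = n}

/-- `G` has no isolated vertices. -/
def SimpleGraph.NoIsolated (G : SimpleGraph V) : Prop := ∀ v, ∃ u, G.Adj u v

/-- Direct product of complete graphs `K_{n 0} × ... × K_{n (t-1)}`:
tuples adjacent iff they differ in every coordinate. -/
def prodCompleteGraphs {t : ℕ} (n : Fin t → ℕ) : SimpleGraph (∀ i, Fin (n i)) where
  Adj a b := a ≠ b ∧ ∀ i, a i ≠ b i
  symm := ⟨fun a b h => ⟨h.1.symm, fun i => (h.2 i).symm⟩⟩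
  loopless := ⟨fun a h => h.1 rfl⟩

/-- `G` together with a new pendant vertex (`none`) attached to `v`. -/
def addPendant (G : SimpleGraph V) (v : V) : SimpleGraph (Option V) where
  Adj x y :=
    match x, y with
    | some a, some b => G.Adj a b
    | some a, none => a = v
    | none, some b => b = v
    | none, none => False
  symm := by
    constructor
    rintro (_ | a) (_ | b) h <;> simp_all [SimpleGraph.adj_comm]
  loopless := by
    constructor
    rintro (_ | a) h <;> simp_all

/-- `G` with a path on `ℓ` vertices appended to vertex `u` via a bridge. -/
def appendPath (G : SimpleGraph V) (u : V) (ℓ : ℕ) : SimpleGraph (V ⊕ Fin ℓ) where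
  Adj x y :=
    match x, y with
    | Sum.inl a, Sum.inl b => G.Adj a b
    | Sum.inl a, Sum.inr j => a = u ∧ (j : ℕ) = 0
    | Sum.inr i, Sum.inl b => b = u ∧ (i : ℕ) = 0
    | Sum.inr i, Sum.inr j => (i : ℕ) + 1 = j ∨ (j : ℕ) + 1 = i
  symm := by
    constructor
    rintro (a | i) (b | j) h <;> simp_all [SimpleGraph.adj_comm] <;> tauto
  loopless := by
    constructor
    rintro (a | i) h <;> simp_all

/-- `G` with a pendant path on two vertices `(v,1)–(v,2)` attached to each vertex `(v,0)`. -/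
def attachPaths2 (G : SimpleGraph V) : SimpleGraph (V × Fin 3) where
  Adj p q :=
    (p.2 = 0 ∧ q.2 = 0 ∧ G.Adj p.1 q.1) ∨
    (p.1 = q.1 ∧ ((p.2 = 0 ∧ q.2 = 1) ∨ (p.2 = 1 ∧ q.2 = 0) ∨
      (p.2 = 1 ∧ q.2 = 2) ∨ (p.2 = 2 ∧ q.2 = 1)))
  symm := by
    constructor
    rintro ⟨a, i⟩ ⟨b, j⟩ h <;> simp_all [SimpleGraph.adj_comm] <;> tauto
  loopless := by
    constructor
    rintro ⟨a, i⟩ h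
    rcases h with ⟨-, -, h⟩ | ⟨-, h⟩
    · exact G.irrefl h
    · rcases h with ⟨h1, h2⟩ | ⟨h1, h2⟩ | ⟨h1, h2⟩ | ⟨h1, h2⟩ <;> simp_all

/-!
A paired dominating set `D` comes with an involution `f` pairing each vertex with a neighbour.
Choosing for each vertex `p` of a 3-packing a dominator `d p ∈ D`, the pairs `{d p, f (d p)}` are
disjoint: otherwise `d p` and `d q` would be equal or adjacent, putting `p` and `q` at distance
at most 3. Hence `D` has at least two vertices per packing vertex. Without isolated vertices, the
vertex set of a maximal matching is paired dominating, so the paired domination number is attained.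
-/

namespace SimpleGraph

variable {α : Type*}

theorem exists_isPerfectMatching_iff_exists_involutive (H : SimpleGraph α) :
    (∃ M : H.Subgraph, M.IsPerfectMatching) ↔
      ∃ f : α → α, Function.Involutive f ∧ ∀ x, H.Adj x (f x) := by
  constructor
  · rintro ⟨M, hM⟩
    choose f hf huniq using fun v => hM.1 (hM.2 v)
    exact ⟨f, fun x => (huniq (f x) x (hf x).symm).symm, fun x => (hf x).adj_sub⟩
  · rintro ⟨f, hf, hadj⟩
    refine ⟨⟨Set.univ, fun a b => f a = b ∨ f b = a, ?_, fun _ => Set.mem_univ _, ?_⟩,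
      ?_, fun _ => Set.mem_univ _⟩
    · rintro a b (rfl | rfl)
      exacts [hadj a, (hadj b).symm]
    · exact ⟨fun a b => Or.symm⟩
    · intro v _
      refine ⟨f v, Or.inl rfl, ?_⟩
      rintro y (rfl | rfl)
      exacts [rfl, (hf y).symm]

theorem Subgraph.IsMatching.exists_isPerfectMatching_induce {G : SimpleGraph α}
    {M : G.Subgraph} (hM : M.IsMatching) :
    ∃ M' : (G.induce M.verts).Subgraph, M'.IsPerfectMatching := by
  choose f hf huniq using fun v : M.verts => hM v.2
  refine (exists_isPerfectMatching_iff_exists_involutive _).2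
    ⟨fun v => ⟨f v, M.edge_vert (hf v).symm⟩, fun v => Subtype.ext ?_, fun v => (hf v).adj_sub⟩
  exact (huniq _ v (hf v).symm).symm

theorem NoIsolated.exists_pairedDominating [Finite α] {G : SimpleGraph α} (hG : G.NoIsolated) :
    ∃ D : Set α, G.PairedDominating D := by
  have hbot : (⊥ : G.Subgraph).IsMatching := fun _ hv => hv.elim
  obtain ⟨M, -, hM⟩ := Finite.exists_le_maximal hbot
  refine ⟨M.verts, fun v => ?_, hM.prop.exists_isPerfectMatching_induce⟩
  by_contra! hv
  obtain ⟨u, hu⟩ := hG v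
  have hvM : v ∉ M.verts := fun h => (hv v h).1 rfl
  have huM : u ∉ M.verts := fun h => (hv u h).2 hu
  have hdisj : Disjoint M.support (G.subgraphOfAdj hu).support := by
    refine hM.prop.support_eq_verts ▸ Set.disjoint_of_subset_right
      (Subgraph.support_subset_verts _) ?_
    simp [Set.disjoint_insert_right, huM, hvM]
  have hsup := hM.le_of_ge (hM.prop.sup (.subgraphOfAdj hu) hdisj) le_sup_left
  exact huM (hsup.1 (Or.inr (Set.mem_insert u {v})))

theorem Packing3.eq_of_edist_le_three {G : SimpleGraph α} {P : Set α} (hP : G.Packing3 P)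
    {p q : α} (hp : p ∈ P) (hq : q ∈ P) (h : G.edist p q ≤ 3) : p = q := by
  by_contra hne
  rcases hP hp hq hne with hr | hd
  · exact hr (edist_ne_top_iff_reachable.1 (ne_top_of_le_ne_top (by decide) h))
  · exact hd.not_ge (ENat.toNat_le_of_le_natCast h)

theorem Packing3.two_mul_ncard_le [Finite α] {G : SimpleGraph α} {P D : Set α}
    (hP : G.Packing3 P) (hD : G.PairedDominating D) : 2 * P.ncard ≤ D.ncard := by
  obtain ⟨hdom, hM⟩ := hD
  obtain ⟨f, hf, hadj⟩ := (exists_isPerfectMatching_iff_exists_involutive _).1 hM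
  choose d hdD hdP using fun p : P => hdom p
  have hnear : ∀ p q : P, G.edist (d p) (d q) ≤ 1 → p = q := fun p q h =>
    Subtype.ext <| hP.eq_of_edist_le_three p.2 q.2 <| calc
      G.edist p q ≤ G.edist p (d p) + (G.edist (d p) (d q) + G.edist (d q) q) :=
        G.edist_triangle.trans (add_le_add_right G.edist_triangle _)
      _ ≤ 1 + (1 + 1) := by
        gcongr
        · rw [edist_comm, edist_le_one_iff_adj_or_eq]; exact (hdP p).symm
        · rw [edist_le_one_iff_adj_or_eq]; exact (hdP q).symm
      _ = 3 := rfl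
  have hnotAdj : ∀ p q : P, ¬G.Adj (d p) (d q) := fun p q h =>
    G.loopless.irrefl _ (hnear p q (edist_le_one_iff_adj_or_eq.2 (.inl h)) ▸ h)
  let g : P → D := fun p => ⟨d p, hdD p⟩
  have hg : Function.Injective g := fun p q h =>
    hnear p q (edist_le_one_iff_adj_or_eq.2 (.inr (congrArg Subtype.val h)))
  let φ : P × Bool → D := fun x => if x.2 then g x.1 else f (g x.1)
  have hφ : Function.Injective φ := by
    rintro ⟨p, _ | _⟩ ⟨q, _ | _⟩ h <;> simp only [φ, Bool.false_eq_true, if_true, if_false] at h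
    · rw [hg (hf.injective h)]
    · exact absurd (h ▸ hadj (g p) : (G.induce D).Adj (g p) (g q)) (hnotAdj p q)
    · exact absurd (h ▸ hadj (g q) : (G.induce D).Adj (g q) (g p)) (hnotAdj q p)
    · rw [hg h]
  calc 2 * P.ncard = Nat.card (P × Bool) := by
        rw [Nat.card_prod, Nat.card_coe_set_eq, Nat.card_eq_fintype_card, Fintype.card_bool,
          mul_comm]
    _ ≤ D.ncard := Nat.card_le_card_of_injective φ hφ

theorem exists_packing3_ncard_eq_packNum3 [Finite α] (G : SimpleGraph α) :
    ∃ P : Set α, G.Packing3 P ∧ P.ncard = G.packNum3 :=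
  Nat.sSup_mem (s := {n | ∃ P : Set α, G.Packing3 P ∧ P.ncard = n})
    ⟨0, ∅, Set.pairwise_empty _, Set.ncard_empty α⟩
    ⟨Nat.card α, by rintro _ ⟨P, -, rfl⟩; exact Set.ncard_le_card P⟩

end SimpleGraph

theorem stmt5 {V : Type*} [Fintype V] (G : SimpleGraph V) (hG : G.NoIsolated) :
    2 * G.packNum3 ≤ G.pairedDomNum := by
  obtain ⟨P, hP, hPcard⟩ := G.exists_packing3_ncard_eq_packNum3
  obtain ⟨D, hD, hDcard⟩ : ∃ D : Set V, G.PairedDominating D ∧ D.ncard = G.pairedDomNum := by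
    obtain ⟨D₀, hD₀⟩ := hG.exists_pairedDominating
    exact Nat.sInf_mem (s := {n | ∃ D : Set V, G.PairedDominating D ∧ D.ncard = n})
      ⟨_, D₀, hD₀, rfl⟩
  rw [← hPcard, ← hDcard]
  exact hP.two_mul_ncard_le hD
end

section
/- For every constant c > 0 and every d ∈ ℕ, there exists a connected graph G of diameter at least d such that γ_pr(G × G) < c·γ_pr(G)². -/
set_option linter.unusedVariables false
set_option linter.unnecessarySeqFocus false

open SimpleGraph

variable {V : Type*} {W : Type*}

/-!
Take `G = K_{2m} × ⋯ × K_{2m}` (`t` factors, `m = t + 1`) with a path on `2(d + 1)` vertices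
appended, which makes the diameter at least `d`. Tuples are adjacent when they differ in every
coordinate, so fewer than `t` vertices never dominate: the tuple that copies the `j`-th of them in
coordinate `j` and avoids all of them in a spare coordinate escapes. Hence `γ_pr(G) ≥ t`.

In `G × G`, a pair of tuples `(x, y)` uses at most `2t < 2m` values, so some constant tuple `c`
is adjacent to both `x` and `y`, and `(c, c)` dominates `(x, y)`. Pairing `j` with `j xor 1` in
every coordinate and along the path is an involution moving each vertex to a neighbour, so the
`2m` diagonal pairs `(c, c)` together with all pairs having a path coordinate (and a constant
tuple or path vertex as the other coordinate) form a paired dominating set of size `O(t)`.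
-/

open Function Set

theorem Fintype.exists_forall_ne_of_card_lt {ι α : Type*} [Fintype ι] [Fintype α] (f : ι → α)
    (h : Fintype.card ι < Fintype.card α) : ∃ a, ∀ i, f i ≠ a := by
  by_contra! hf
  exact h.not_ge (Fintype.card_le_of_surjective f hf)

theorem Set.ncard_range_le {α β : Type*} [Finite α] (f : α → β) :
    (range f).ncard ≤ Nat.card α := by
  rw [← image_univ, ← ncard_univ]
  exact ncard_image_le

namespace SimpleGraph

variable {X Y : Type*} {G : SimpleGraph V} {G' : SimpleGraph W} {H : SimpleGraph X}
  {H' : SimpleGraph Y}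

@[simp]
theorem tensor_adj {p q : V × X} : (G.tensor H).Adj p q ↔ G.Adj p.1 q.1 ∧ H.Adj p.2 q.2 :=
  Iff.rfl

def Iso.tensor (e : G ≃g G') (f : H ≃g H') : G.tensor H ≃g G'.tensor H' :=
  { e.toEquiv.prodCongr f.toEquiv with
    map_rel_iff' := by simp [e.map_adj_iff, f.map_adj_iff] }

theorem TotalDominating.dominating {D : Set V} (h : G.TotalDominating D) : G.Dominating D :=
  fun v => (h v).imp fun _ hu => ⟨hu.1, Or.inr hu.2⟩

theorem PairedDominating.pairedDomNum_le {D : Set V} (h : G.PairedDominating D) :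
    G.pairedDomNum ≤ D.ncard :=
  Nat.sInf_le ⟨D, h, rfl⟩

/-- The edges `v – σ v` form the perfect matching. -/
theorem Dominating.pairedDominating_of_involutive {σ : V → V} (hσ : Involutive σ)
    (hadj : ∀ v, G.Adj v (σ v)) {D : Set V} (hD : G.Dominating D) (hσD : MapsTo σ D D) :
    G.PairedDominating D := by
  let M : (G.induce D).Subgraph :=
    { verts := univ
      Adj := fun a b => (b : V) = σ a
      adj_sub := fun {a b} h => by simpa [h] using hadj a
      edge_vert := fun _ => trivial
      symm := ⟨fun a b h => by simp [h, hσ _]⟩ }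
  refine ⟨hD, M, Subgraph.isPerfectMatching_iff.2 fun a => ?_⟩
  exact ⟨⟨σ a, hσD a.2⟩, rfl, fun b hb => Subtype.ext hb⟩

theorem Iso.dominating_image (e : G ≃g G') {D : Set V} (hD : G.Dominating D) :
    G'.Dominating (e '' D) := by
  intro v
  obtain ⟨u, hu, huv⟩ := hD (e.symm v)
  refine ⟨e u, mem_image_of_mem e hu, ?_⟩
  rcases huv with rfl | huv
  · simp
  · exact Or.inr (by simpa using e.map_adj_iff.2 huv)

theorem Iso.pairedDominating_image (e : G ≃g G') {D : Set V} (hD : G.PairedDominating D) :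
    G'.PairedDominating (e '' D) := by
  obtain ⟨hdom, M, hM⟩ := hD
  let f := e.induce (e.injective.injOn.bijOn_image (s := D))
  exact ⟨e.dominating_image hdom, M.map f.toHom, (Subgraph.Iso.isMatching_map f).2 hM.1,
    fun v => ⟨f.symm v, hM.2 _, f.apply_symm_apply v⟩⟩

theorem Iso.pairedDomNum_eq (e : G ≃g G') : G.pairedDomNum = G'.pairedDomNum := by
  unfold pairedDomNum
  congr 1
  ext n
  constructor
  · rintro ⟨D, hD, rfl⟩
    exact ⟨e '' D, e.pairedDominating_image hD, ncard_image_of_injective D e.injective⟩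
  · rintro ⟨D, hD, rfl⟩
    exact ⟨e.symm '' D, e.symm.pairedDominating_image hD,
      ncard_image_of_injective D e.symm.injective⟩

theorem Reachable.dist_map_le (f : G →g G') {u v : V} (h : G.Reachable u v) :
    G'.dist (f u) (f v) ≤ G.dist u v := by
  obtain ⟨p, hp⟩ := h.exists_walk_length_eq_dist
  simpa [hp] using dist_le (p.map f)

theorem Iso.dist_eq (e : G ≃g G') (u v : V) : G'.dist (e u) (e v) = G.dist u v := by
  by_cases h : G.Reachable u v
  · refine le_antisymm (h.dist_map_le e.toHom) ?_
    simpa using (e.reachable_iff.2 h).dist_map_le e.symm.toHom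
  · rw [dist_eq_zero_of_not_reachable h,
      dist_eq_zero_of_not_reachable (mt e.reachable_iff.1 h)]

theorem Reachable.le_add_dist_of_adj {φ : V → ℕ} (hφ : ∀ a b, G.Adj a b → φ a ≤ φ b + 1)
    {u v : V} (h : G.Reachable u v) : φ u ≤ φ v + G.dist u v := by
  obtain ⟨p, hp⟩ := h.exists_walk_length_eq_dist
  rw [← hp]
  clear hp h
  induction p with
  | nil => simp
  | cons hadj _ ih =>
    have := hφ _ _ hadj
    rw [Walk.length_cons]
    omega

end SimpleGraph

section prodCompleteGraphs

variable {t : ℕ} {n : Fin t → ℕ}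

theorem prodCompleteGraphs_adj_of_forall_ne [NeZero t] {a b : ∀ i, Fin (n i)}
    (h : ∀ i, a i ≠ b i) : (prodCompleteGraphs n).Adj a b :=
  ⟨fun hab => h 0 (congrFun hab 0), h⟩

/-- Copy `w j` in coordinate `j`, and avoid `u` and all the `w j` in the spare coordinate `s`. -/
theorem prodCompleteGraphs_exists_undominated (hn : ∀ i, t < n i) {s : ℕ} (hs : s < t)
    (w : Fin s → ∀ i, Fin (n i)) (u : ∀ i, Fin (n i)) :
    ∃ x, x ≠ u ∧ ∀ j, w j ≠ x ∧ ∃ i, w j i = x i := by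
  have hfresh (i : Fin t) : ∃ b, ∀ o : Option (Fin s), o.elim (u i) (fun j => w j i) ≠ b :=
    Fintype.exists_forall_ne_of_card_lt _ (by have := hn i; simp; omega)
  choose b hb using hfresh
  let x : ∀ i, Fin (n i) := fun i => if h : (i : ℕ) < s then w ⟨i, h⟩ i else b i
  have hx : x ⟨s, hs⟩ = b ⟨s, hs⟩ := dif_neg (lt_irrefl s)
  refine ⟨x, fun hxu => hb _ none (by rw [← hxu, hx]; rfl), fun j => ⟨fun hwx => ?_, ?_⟩⟩
  · exact hb _ (some j) (by rw [← hx, ← hwx]; rfl)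
  · exact ⟨⟨j, j.2.trans hs⟩, by simp [x]⟩

theorem SimpleGraph.Dominating.le_ncard_of_appendPath (hn : ∀ i, t < n i)
    {u : ∀ i, Fin (n i)} {ℓ : ℕ} {D : Set ((∀ i, Fin (n i)) ⊕ Fin ℓ)}
    (hD : (appendPath (prodCompleteGraphs n) u ℓ).Dominating D) : t ≤ D.ncard := by
  by_contra! hlt
  have hT : (Sum.inl ⁻¹' D).ncard < t :=
    (ncard_le_ncard_of_injOn Sum.inl (fun _ h => h) Sum.inl_injective.injOn).trans_lt hlt
  let T := (toFinite (Sum.inl ⁻¹' D)).toFinset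
  obtain ⟨x, hxu, hx⟩ := prodCompleteGraphs_exists_undominated hn
    (by rwa [ncard_eq_toFinset_card _ (toFinite _)] at hT) (fun j => (T.equivFin.symm j).1) u
  obtain ⟨w | j, hw, hwx⟩ := hD (Sum.inl x)
  · obtain ⟨hne, i, hi⟩ := hx (T.equivFin ⟨w, by simpa [T] using hw⟩)
    simp only [Equiv.symm_apply_apply] at hne hi
    rcases hwx with hwx | hwx
    · exact hne (Sum.inl_injective hwx)
    · exact hwx.2 i hi
  · rcases hwx with hwx | hwx
    · exact Sum.inr_ne_inl hwx
    · exact hxu hwx.1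

end prodCompleteGraphs

section appendPath

variable {G : SimpleGraph V} {u : V} {ℓ : ℕ}

@[simp]
theorem appendPath_adj_inr_inl {i : Fin ℓ} {b : V} :
    (appendPath G u ℓ).Adj (Sum.inr i) (Sum.inl b) ↔ b = u ∧ (i : ℕ) = 0 := Iff.rfl

@[simp]
theorem appendPath_adj_inr_inr {i j : Fin ℓ} :
    (appendPath G u ℓ).Adj (Sum.inr i) (Sum.inr j) ↔ (i : ℕ) + 1 = j ∨ (j : ℕ) + 1 = i := Iff.rfl

theorem appendPath_reachable_inl (i : Fin ℓ) :
    (appendPath G u ℓ).Reachable (Sum.inr i) (Sum.inl u) := by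
  obtain ⟨i, hi⟩ := i
  induction i with
  | zero => exact Adj.reachable (by simp)
  | succ i ih =>
    have hlt : i < ℓ := by omega
    exact (Adj.reachable (by simp : (appendPath G u ℓ).Adj (Sum.inr ⟨i + 1, hi⟩)
      (Sum.inr ⟨i, hlt⟩))).trans (ih hlt)

theorem appendPath_connected (hG : G.Connected) : (appendPath G u ℓ).Connected := by
  have hreach : ∀ v, (appendPath G u ℓ).Reachable v (Sum.inl u) := by
    rintro (a | i)
    · exact (hG.preconnected a u).map ⟨Sum.inl, id⟩
    · exact appendPath_reachable_inl i
  have : Nonempty V := hG.nonempty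
  exact (connected_iff _).2 ⟨fun v w => (hreach v).trans (hreach w).symm, inferInstance⟩

theorem appendPath_le_dist (hG : G.Connected) (i : Fin ℓ) (a : V) :
    (i : ℕ) + 1 ≤ (appendPath G u ℓ).dist (Sum.inr i) (Sum.inl a) := by
  let depth : V ⊕ Fin ℓ → ℕ := Sum.elim (fun _ => 0) (fun j => j + 1)
  have hdepth : ∀ v w, (appendPath G u ℓ).Adj v w → depth v ≤ depth w + 1 := by
    rintro (_ | _) (_ | _) h <;> simp_all [depth] <;> omega
  simpa [depth] using
    ((appendPath_connected hG).preconnected (Sum.inr i) (Sum.inl a)).le_add_dist_of_adj hdepth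

end appendPath

section Construction

def pairSwap {k : ℕ} (j : Fin (2 * k)) : Fin (2 * k) :=
  if h : (j : ℕ) % 2 = 0 then ⟨j + 1, by omega⟩ else ⟨j - 1, by omega⟩

theorem val_pairSwap {k : ℕ} (j : Fin (2 * k)) :
    (pairSwap j : ℕ) = if (j : ℕ) % 2 = 0 then (j : ℕ) + 1 else (j : ℕ) - 1 := by
  unfold pairSwap
  split_ifs <;> rfl

theorem pairSwap_involutive {k : ℕ} : Involutive (pairSwap (k := k)) := by
  intro j
  ext
  rw [val_pairSwap, val_pairSwap]
  split_ifs <;> omega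

theorem pairSwap_succ_or_pred {k : ℕ} (j : Fin (2 * k)) :
    (j : ℕ) + 1 = pairSwap j ∨ (pairSwap j : ℕ) + 1 = j := by
  rw [val_pairSwap]
  split_ifs <;> omega

variable {t m k : ℕ}

abbrev cliquePowerWithPath (t m k : ℕ) (u : Fin t → Fin (2 * m)) :
    SimpleGraph ((Fin t → Fin (2 * m)) ⊕ Fin (2 * k)) :=
  appendPath (prodCompleteGraphs fun _ : Fin t => 2 * m) u (2 * k)

theorem exists_const_adj_adj [NeZero t] (ht : t < m) (x y : Fin t → Fin (2 * m)) :
    ∃ a, (prodCompleteGraphs fun _ : Fin t => 2 * m).Adj x (fun _ => a) ∧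
      (prodCompleteGraphs fun _ : Fin t => 2 * m).Adj y (fun _ => a) := by
  obtain ⟨a, ha⟩ := Fintype.exists_forall_ne_of_card_lt (Sum.elim x y) (by simp; omega)
  exact ⟨a, prodCompleteGraphs_adj_of_forall_ne fun i => ha (Sum.inl i),
    prodCompleteGraphs_adj_of_forall_ne fun i => ha (Sum.inr i)⟩

theorem prodCompleteGraphs_const_connected [NeZero t] (ht : t < m) :
    (prodCompleteGraphs fun _ : Fin t => 2 * m).Connected := by
  have : Nonempty (Fin (2 * m)) := ⟨⟨0, by omega⟩⟩
  refine (connected_iff _).2 ⟨fun x y => ?_, inferInstance⟩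
  obtain ⟨a, hx, hy⟩ := exists_const_adj_adj ht x y
  exact hx.reachable.trans hy.reachable.symm

def pairing : (Fin t → Fin (2 * m)) ⊕ Fin (2 * k) → (Fin t → Fin (2 * m)) ⊕ Fin (2 * k) :=
  Sum.map (fun x i => pairSwap (x i)) pairSwap

theorem pairing_involutive : Involutive (pairing (t := t) (m := m) (k := k)) := by
  rintro (x | j) <;> simp [pairing, pairSwap_involutive _]

theorem cliquePowerWithPath_adj_pairSwap (u : Fin t → Fin (2 * m)) (j : Fin (2 * k)) :
    (cliquePowerWithPath t m k u).Adj (Sum.inr (pairSwap j)) (Sum.inr j) := by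
  simpa [or_comm] using pairSwap_succ_or_pred j

theorem adj_pairing [NeZero t] (u : Fin t → Fin (2 * m))
    (v : (Fin t → Fin (2 * m)) ⊕ Fin (2 * k)) :
    (cliquePowerWithPath t m k u).Adj v (pairing v) := by
  rcases v with x | j
  · refine prodCompleteGraphs_adj_of_forall_ne fun i h => ?_
    have := pairSwap_succ_or_pred (x i)
    simp only [← h] at this
    omega
  · exact (cliquePowerWithPath_adj_pairSwap u j).symm

def constPathSet (t m k : ℕ) : Set ((Fin t → Fin (2 * m)) ⊕ Fin (2 * k)) :=
  range (fun a => Sum.inl fun _ => a) ∪ range Sum.inr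

/-- Only the diagonal pairs of constant tuples occur, which keeps this set linear in `t`. -/
def tensorPathSet (t m k : ℕ) :
    Set (((Fin t → Fin (2 * m)) ⊕ Fin (2 * k)) × ((Fin t → Fin (2 * m)) ⊕ Fin (2 * k))) :=
  range (fun a => (Sum.inl fun _ => a, Sum.inl fun _ => a)) ∪
    (constPathSet t m k ×ˢ range Sum.inr ∪ range Sum.inr ×ˢ constPathSet t m k)

theorem totalDominating_constPathSet [NeZero t] (ht : t < m) (u : Fin t → Fin (2 * m)) :
    (cliquePowerWithPath t m k u).TotalDominating (constPathSet t m k) := by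
  rintro (x | j)
  · obtain ⟨a, hx, -⟩ := exists_const_adj_adj ht x x
    exact ⟨_, Or.inl ⟨a, rfl⟩, hx.symm⟩
  · exact ⟨_, Or.inr ⟨pairSwap j, rfl⟩, cliquePowerWithPath_adj_pairSwap u j⟩

theorem mapsTo_pairing_constPathSet :
    MapsTo pairing (constPathSet t m k) (constPathSet t m k) := by
  rintro _ (⟨a, rfl⟩ | ⟨j, rfl⟩)
  · exact Or.inl ⟨pairSwap a, rfl⟩
  · exact Or.inr ⟨pairSwap j, rfl⟩

theorem ncard_constPathSet_le : (constPathSet t m k).ncard ≤ 2 * m + 2 * k :=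
  (ncard_union_le _ _).trans <| add_le_add
    (by simpa using ncard_range_le fun a : Fin (2 * m) =>
      (Sum.inl fun _ : Fin t => a : _ ⊕ Fin (2 * k)))
    (by simpa using ncard_range_le (Sum.inr : Fin (2 * k) → (Fin t → Fin (2 * m)) ⊕ _))

theorem totalDominating_tensorPathSet [NeZero t] (ht : t < m) (u : Fin t → Fin (2 * m)) :
    ((cliquePowerWithPath t m k u).tensor (cliquePowerWithPath t m k u)).TotalDominating
      (tensorPathSet t m k) := by
  rintro ⟨v, y | j⟩
  · rcases v with x | i
    · obtain ⟨a, hx, hy⟩ := exists_const_adj_adj ht x y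
      exact ⟨_, Or.inl ⟨a, rfl⟩, hx.symm, hy.symm⟩
    · obtain ⟨s, hs, hsy⟩ := totalDominating_constPathSet ht u (Sum.inl y)
      exact ⟨(Sum.inr (pairSwap i), s), Or.inr (Or.inr ⟨⟨_, rfl⟩, hs⟩),
        cliquePowerWithPath_adj_pairSwap u i, hsy⟩
  · obtain ⟨s, hs, hsv⟩ := totalDominating_constPathSet ht u v
    exact ⟨(s, Sum.inr (pairSwap j)), Or.inr (Or.inl ⟨hs, _, rfl⟩), hsv,
      cliquePowerWithPath_adj_pairSwap u j⟩

theorem mapsTo_pairing_tensorPathSet :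
    MapsTo (Prod.map pairing pairing) (tensorPathSet t m k) (tensorPathSet t m k) := by
  rintro _ (⟨a, rfl⟩ | ⟨hv, j, hj⟩ | ⟨⟨i, hi⟩, hw⟩)
  · exact Or.inl ⟨pairSwap a, rfl⟩
  · exact Or.inr (Or.inl ⟨mapsTo_pairing_constPathSet hv, pairSwap j, by simp [← hj, pairing]⟩)
  · exact Or.inr (Or.inr ⟨⟨pairSwap i, by simp [← hi, pairing]⟩, mapsTo_pairing_constPathSet hw⟩)

theorem ncard_tensorPathSet_le :
    (tensorPathSet t m k).ncard ≤ 2 * m + 2 * (2 * k) * (2 * m + 2 * k) := by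
  have hpath : (range (Sum.inr : Fin (2 * k) → (Fin t → Fin (2 * m)) ⊕ _)).ncard ≤ 2 * k := by
    simpa using ncard_range_le (Sum.inr : Fin (2 * k) → (Fin t → Fin (2 * m)) ⊕ _)
  have hdiag := ncard_range_le fun a : Fin (2 * m) =>
    ((Sum.inl fun _ : Fin t => a : _ ⊕ Fin (2 * k)),
      (Sum.inl fun _ : Fin t => a : _ ⊕ Fin (2 * k)))
  simp only [Nat.card_eq_fintype_card, Fintype.card_fin] at hdiag
  have hcore := ncard_constPathSet_le (t := t) (m := m) (k := k)
  refine (ncard_union_le _ _).trans ?_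
  refine add_le_add hdiag ((ncard_union_le _ _).trans ?_)
  rw [ncard_prod, ncard_prod]
  nlinarith

theorem le_pairedDomNum_cliquePowerWithPath [NeZero t] (ht : t < m) (u : Fin t → Fin (2 * m)) :
    t ≤ (cliquePowerWithPath t m k u).pairedDomNum := by
  have hpd : (cliquePowerWithPath t m k u).PairedDominating (constPathSet t m k) :=
    (totalDominating_constPathSet ht u).dominating.pairedDominating_of_involutive
      pairing_involutive (adj_pairing u) mapsTo_pairing_constPathSet
  exact le_csInf ⟨_, _, hpd, rfl⟩ fun n ⟨D, hD, hn⟩ =>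
    hn ▸ Dominating.le_ncard_of_appendPath (fun _ => by omega) hD.1

theorem pairedDomNum_tensor_cliquePowerWithPath_le [NeZero t] (ht : t < m)
    (u : Fin t → Fin (2 * m)) :
    ((cliquePowerWithPath t m k u).tensor (cliquePowerWithPath t m k u)).pairedDomNum ≤
      2 * m + 2 * (2 * k) * (2 * m + 2 * k) := by
  have hpd : ((cliquePowerWithPath t m k u).tensor (cliquePowerWithPath t m k u)).PairedDominating
      (tensorPathSet t m k) :=
    (totalDominating_tensorPathSet ht u).dominating.pairedDominating_of_involutive
      (pairing_involutive.prodMap pairing_involutive)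
      (fun p => tensor_adj.2 ⟨adj_pairing u p.1, adj_pairing u p.2⟩) mapsTo_pairing_tensorPathSet
  exact hpd.pairedDomNum_le.trans ncard_tensorPathSet_le

end Construction

theorem stmt12 (c : ℝ) (hc : 0 < c) (d : ℕ) :
    ∃ (n : ℕ) (G : SimpleGraph (Fin n)), G.Connected ∧ (∃ u v : Fin n, d ≤ G.dist u v) ∧
      ((G.tensor G).pairedDomNum : ℝ) < c * (G.pairedDomNum : ℝ) ^ 2 := by
  set C : ℕ := 4 + 8 * (d + 1) * (d + 3)
  obtain ⟨t, hCt⟩ := exists_nat_gt ((C : ℝ) / c)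
  have ht : 0 < t := by exact_mod_cast (div_nonneg (Nat.cast_nonneg C) hc.le).trans_lt hCt
  have : NeZero t := ⟨ht.ne'⟩
  let u : Fin t → Fin (2 * (t + 1)) := fun _ => ⟨0, by omega⟩
  let G := cliquePowerWithPath t (t + 1) (d + 1) u
  let e := G.overFinIso rfl
  have hK := prodCompleteGraphs_const_connected (lt_add_one t)
  refine ⟨_, G.overFin rfl, e.connected_iff.1 (appendPath_connected hK),
    ⟨e (Sum.inr ⟨d, by omega⟩), e (Sum.inl u), ?_⟩, ?_⟩
  · rw [e.dist_eq]
    exact (Nat.le_succ d).trans (appendPath_le_dist (ℓ := 2 * (d + 1)) hK ⟨d, by omega⟩ u)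
  rw [← e.pairedDomNum_eq, ← (e.tensor e).pairedDomNum_eq]
  have hlow : (t : ℝ) ≤ G.pairedDomNum := by
    exact_mod_cast le_pairedDomNum_cliquePowerWithPath (lt_add_one t) u
  have hup : ((G.tensor G).pairedDomNum : ℝ) ≤ C * t := by
    have := pairedDomNum_tensor_cliquePowerWithPath_le (k := d + 1) (lt_add_one t) u
    exact_mod_cast this.trans <| by
      simp only [C]
      nlinarith [Nat.mul_le_mul_left ((d + 1) * (d + 2)) (Nat.one_le_iff_ne_zero.2 ht.ne')]
  rw [div_lt_iff₀ hc] at hCt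
  calc ((G.tensor G).pairedDomNum : ℝ) ≤ C * t := hup
    _ < t * c * t := by gcongr
    _ = c * t ^ 2 := by ring
    _ ≤ c * G.pairedDomNum ^ 2 := by gcongr
end
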